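/- arXiv:1001.4028 — 4 statements merged into one kernel-verified Lean document; each statement's English description precedes it below -/
import Mathlib

section
/- Let G be a finite graph with m vertices and combinatorial Laplacian Δ_G, let n ≥ 1, and let z be a nonzero complex number. Let H_n = G × Z_n and let Δ be the line-bundle Laplacian on H_n for the connection with parallel transport 1 on all edges except the edges from (x,n−1) to (x,0), which have parallel transport z (and z^{-1} in the reverse direction). Then det Δ = Π_{ζ : ζ^n = z} det(Δ_G + (2 − ζ − ζ^{-1}) I_m), the product over all n-th roots ζ of z. -/
/-!
The line-bundle Laplacian of `G × ℤ/n` is the Kronecker sum `Δ_G ⊗ 1 + 1 ⊗ C` with `C` the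
twisted Laplacian of the cycle. For each `n`-th root `ζ` of `z`, the vector `j ↦ ζ⁻ʲ` is an
eigenvector of `C` with eigenvalue `2 - ζ - ζ⁻¹`; these `n` vectors are the columns of an
invertible Vandermonde matrix `F`, and conjugation by `1 ⊗ F` turns the Laplacian into the block
diagonal matrix with blocks `Δ_G + (2 - ζ - ζ⁻¹) I`.
-/

open Finset

variable {V : Type*}

def stdLaplacian [Fintype V] [DecidableEq V] (G : SimpleGraph V) [DecidableRel G.Adj] :
    Matrix V V ℂ :=
  Matrix.of fun v v' => if v = v' then (G.degree v : ℂ) else if G.Adj v v' then -1 else 0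

open Matrix Kronecker

section KroneckerSum

variable {R m ι : Type*} [CommRing R] [DecidableEq m] [DecidableEq ι]

theorem blockDiagonal_add_smul_one (A : Matrix m m R) (c : ι → R) :
    blockDiagonal (fun k => A + c k • (1 : Matrix m m R)) = A ⊗ₖ 1 + 1 ⊗ₖ diagonal c := by
  rw [kronecker_one, kronecker_diagonal, ← blockDiagonal_add]
  congr 1
  ext k : 1
  simp only [Pi.add_apply, op_smul_eq_smul]

theorem det_kronecker_one_add_one_kronecker [Fintype m] [Fintype ι] (A : Matrix m m R)
    {C F : Matrix ι ι R} {c : ι → R} (hF : IsUnit F.det) (hCF : C * F = F * diagonal c) :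
    (A ⊗ₖ 1 + 1 ⊗ₖ C).det = ∏ k, (A + c k • (1 : Matrix m m R)).det := by
  set P : Matrix (m × ι) (m × ι) R := 1 ⊗ₖ F
  have hP : IsUnit P.det := by
    simpa only [P, det_kronecker, det_one, one_pow, one_mul] using hF.pow (Fintype.card m)
  have hconj : (A ⊗ₖ 1 + 1 ⊗ₖ C) * P = P * blockDiagonal fun k => A + c k • 1 := by
    rw [blockDiagonal_add_smul_one, add_mul, mul_add, ← mul_kronecker_mul, ← mul_kronecker_mul,
      ← mul_kronecker_mul, ← mul_kronecker_mul, hCF]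
    simp only [Matrix.one_mul, Matrix.mul_one]
  rw [← det_blockDiagonal]
  refine hP.mul_left_cancel ?_
  rw [← det_mul, ← det_mul, ← hconj, det_mul_comm]

end KroneckerSum

namespace ZMod

variable {n : ℕ} [NeZero n]

theorem val_neg_one_add_one : (-1 : ZMod n).val + 1 = n := by
  obtain ⟨m, rfl⟩ := Nat.exists_eq_succ_of_ne_zero (NeZero.ne n)
  rw [val_neg_one]

theorem val_add_one_of_ne_neg_one {j : ZMod n} (hj : j ≠ -1) : (j + 1).val = j.val + 1 := by
  have hlt : j.val + 1 < n := by
    refine lt_of_le_of_ne j.val_lt fun h => hj (eq_neg_of_add_eq_zero_left ?_)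
    rw [← natCast_zmod_val j, ← Nat.cast_add_one, h, natCast_self]
  rw [← val_cast_of_lt hlt, Nat.cast_add_one, natCast_zmod_val]

theorem ite_mul_pow_val_add_one {M : Type*} [Monoid M] {η a : M} (hη : η ^ n = a)
    (j : ZMod n) : (if j = -1 then a else 1) * η ^ (j + 1).val = η * η ^ j.val := by
  rw [← pow_succ']
  split_ifs with hj
  · rw [hj, neg_add_cancel, val_zero, pow_zero, mul_one, val_neg_one_add_one, hη]
  · rw [one_mul, val_add_one_of_ne_neg_one hj]

end ZMod

section TwistedCycle

variable {K : Type*} [Field K]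

def twistedCycleLaplacian (n : ℕ) (z : K) : Matrix (ZMod n) (ZMod n) K :=
  of fun j k => (if j = k then 2 else 0)
    - (if k = j + 1 then (if j = -1 then z⁻¹ else 1) else 0)
    - (if j = k + 1 then (if k = -1 then z else 1) else 0)

variable {n : ℕ} [NeZero n]

theorem twistedCycleLaplacian_mulVec_apply (z : K) (f : ZMod n → K) (j : ZMod n) :
    (twistedCycleLaplacian n z *ᵥ f) j = 2 * f j - (if j = -1 then z⁻¹ else 1) * f (j + 1)
      - (if j - 1 = -1 then z else 1) * f (j - 1) := by
  have hprev (k : ZMod n) : j = k + 1 ↔ k = j - 1 := eq_comm.trans eq_sub_iff_add_eq.symm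
  simp only [mulVec, dotProduct, twistedCycleLaplacian, of_apply, sub_mul, ite_mul, zero_mul,
    sum_sub_distrib, hprev, sum_ite_eq, sum_ite_eq', mem_univ, if_true]

theorem twistedCycleLaplacian_mulVec_pow_val {z η : K} (hz : z ≠ 0) (hη : η ^ n = z⁻¹) :
    twistedCycleLaplacian n z *ᵥ (fun j => η ^ j.val) = (2 - η - η⁻¹) • fun j => η ^ j.val := by
  have hη0 : η ≠ 0 := by
    rintro rfl
    exact inv_ne_zero hz (hη ▸ zero_pow (NeZero.ne n))
  ext j
  have hprev : η ^ (j - 1).val = η⁻¹ * ((if j - 1 = -1 then z⁻¹ else 1) * η ^ j.val) := by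
    have hshift := ZMod.ite_mul_pow_val_add_one hη (j - 1)
    rw [sub_add_cancel] at hshift
    rw [hshift, inv_mul_cancel_left₀ hη0]
  rw [twistedCycleLaplacian_mulVec_apply, ZMod.ite_mul_pow_val_add_one hη, hprev, Pi.smul_apply,
    smul_eq_mul]
  split_ifs <;> field_simp

theorem twistedCycleLaplacian_mul_eq_mul_diagonal {z : K} (hz : z ≠ 0) {η : ZMod n → K}
    (hη : ∀ k, η k ^ n = z⁻¹) :
    twistedCycleLaplacian n z * of (fun j k => η k ^ j.val)
      = of (fun j k => η k ^ j.val) * diagonal fun k => 2 - η k - (η k)⁻¹ := by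
  ext j k
  rw [mul_diagonal, of_apply, mul_comm]
  exact congrFun (twistedCycleLaplacian_mulVec_pow_val hz (hη k)) j

end TwistedCycle

theorem det_of_pow_val_ne_zero {R : Type*} [CommRing R] [IsDomain R] {n : ℕ} [NeZero n]
    {η : ZMod n → R} (hη : Function.Injective η) :
    (of fun j k : ZMod n => η k ^ j.val).det ≠ 0 := by
  obtain ⟨m, rfl⟩ := Nat.exists_eq_succ_of_ne_zero (NeZero.ne n)
  rw [← det_transpose]
  exact det_vandermonde_ne_zero_iff.mpr hη

-- Written as a sum rather than by cases so that for `n ≤ 2`, where `j + 1 = j - 1` or even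
-- `j + 1 = j`, the entries add up as for the corresponding multigraph.
noncomputable def cylinderLineLaplacian [Fintype V] [DecidableEq V] (G : SimpleGraph V)
    [DecidableRel G.Adj] (n : ℕ) (z : ℂ) : Matrix (V × ZMod n) (V × ZMod n) ℂ :=
  Matrix.of fun a b : V × ZMod n =>
    (if a = b then (G.degree a.1 : ℂ) + 2 else 0)
      - (if a.1 = b.1 ∧ b.2 = a.2 + 1 then (if a.2 = -1 then z⁻¹ else 1) else 0)
      - (if a.1 = b.1 ∧ a.2 = b.2 + 1 then (if b.2 = -1 then z else 1) else 0)
      - (if a.2 = b.2 ∧ G.Adj a.1 b.1 then 1 else 0)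

theorem cylinderLineLaplacian_eq_kronecker [Fintype V] [DecidableEq V] (G : SimpleGraph V)
    [DecidableRel G.Adj] (n : ℕ) (z : ℂ) :
    cylinderLineLaplacian G n z = stdLaplacian G ⊗ₖ 1 + 1 ⊗ₖ twistedCycleLaplacian n z := by
  ext ⟨x, j⟩ ⟨y, k⟩
  simp only [cylinderLineLaplacian, twistedCycleLaplacian, stdLaplacian, Matrix.add_apply,
    kroneckerMap_apply, one_apply, of_apply, Prod.mk.injEq]
  by_cases hxy : x = y
  · subst hxy
    by_cases hjk : j = k
    · subst hjk
      simp only [and_self, ↓reduceIte, left_eq_add, true_and, SimpleGraph.irrefl, and_false,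
        sub_zero, mul_one, one_mul]
      ring
    · simp [hjk]
  · by_cases hjk : j = k
    · subst hjk
      by_cases hadj : G.Adj x y <;> simp [hxy, hadj]
    · simp [hjk, hxy]

theorem prod_map_nthRoots_pow {R M : Type*} [CommRing R] [IsDomain R] [CommMonoid M] {n : ℕ}
    [NeZero n] {ω : R} (hω : IsPrimitiveRoot ω n) (w : R) (f : R → M) :
    ((Polynomial.nthRoots n (w ^ n)).map f).prod = ∏ k : ZMod n, f (ω ^ k.val * w) := by
  obtain ⟨m, rfl⟩ := Nat.exists_eq_succ_of_ne_zero (NeZero.ne n)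
  rw [hω.nthRoots_eq rfl, Multiset.map_map, ← range_val, ← prod_eq_multiset_prod]
  exact (Fin.prod_univ_eq_prod_range _ _).symm

theorem det_cylinder_lineLaplacian [Fintype V] [DecidableEq V]
    (G : SimpleGraph V) [DecidableRel G.Adj]
    (n : ℕ) [NeZero n] (z : ℂ) (hz : z ≠ 0) :
    (Matrix.of fun a b : V × ZMod n =>
        (if a = b then (G.degree a.1 : ℂ) + 2 else 0)
          - (if a.1 = b.1 ∧ b.2 = a.2 + 1 then (if a.2 = -1 then z⁻¹ else 1) else 0)
          - (if a.1 = b.1 ∧ a.2 = b.2 + 1 then (if b.2 = -1 then z else 1) else 0)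
          - (if a.2 = b.2 ∧ G.Adj a.1 b.1 then 1 else 0)).det
      = ((Polynomial.nthRoots n z).map fun ζ =>
          (stdLaplacian G + (2 - ζ - ζ⁻¹) • (1 : Matrix V V ℂ)).det).prod := by
  obtain ⟨w, rfl⟩ := IsAlgClosed.exists_pow_nat_eq z (NeZero.pos n)
  have hw : w ≠ 0 := ne_zero_pow (NeZero.ne n) hz
  obtain ⟨ω, hω⟩ : ∃ ω : ℂ, IsPrimitiveRoot ω n :=
    ⟨_, Complex.isPrimitiveRoot_exp n (NeZero.ne n)⟩
  set ζ : ZMod n → ℂ := fun k => ω ^ k.val * w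
  have hζ : Function.Injective ζ := fun k l h =>
    ZMod.val_injective n (hω.pow_inj k.val_lt l.val_lt (mul_right_cancel₀ hw h))
  have hζn (k : ZMod n) : (ζ k)⁻¹ ^ n = (w ^ n)⁻¹ := by
    rw [inv_pow, mul_pow, ← pow_mul, mul_comm k.val, pow_mul, hω.pow_eq_one, one_pow, one_mul]
  change (cylinderLineLaplacian G n (w ^ n)).det = _
  rw [cylinderLineLaplacian_eq_kronecker, prod_map_nthRoots_pow hω,
    det_kronecker_one_add_one_kronecker _ (det_of_pow_val_ne_zero (inv_injective.comp hζ)).isUnit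
      (twistedCycleLaplacian_mul_eq_mul_diagonal hz hζn)]
  simp only [ζ, Function.comp_apply, inv_inv, sub_right_comm _ (ζ _)⁻¹]
end

section
/- Let m, n ≥ 1 and let z, w be nonzero complex numbers. Let Δ be the linear operator on ℂ^{(ℤ/mℤ)×(ℤ/nℤ)} defined by (Δf)(x,y) = 2 f(x,y) − α(x) f(x+1,y) − β(y) f(x,y+1), where α(x) = z if x = m−1 and α(x) = 1 otherwise, and β(y) = w if y = n−1 and β(y) = 1 otherwise. Then det Δ = Π_{u : u^m = z} Π_{v : v^n = w} (2 − u − v), the product over all m-th roots u of z and all n-th roots v of w. -/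
/-!
The functions `f (x, y) = u ^ x * v ^ y` with `u ^ m = z` and `v ^ n = w`, exponents taken as the
representatives in `[0, m)` and `[0, n)`, are eigenvectors of `Δ` with eigenvalue `2 - u - v`:
the monodromies `z` and `w` exactly compensate for the exponent dropping back to `0` at the seam.
As `z, w ≠ 0` there are `m` distinct `u` and `n` distinct `v`, and the matrix of these `m n`
eigenvectors is a Kronecker product of two Vandermonde matrices, hence invertible. So `Δ` is
diagonalised and its determinant is the product of the eigenvalues.
-/

open Polynomial Matrix

namespace ZMod

lemma val_add_one_eq_ite {m : ℕ} [NeZero m] (x : ZMod m) :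
    (x + 1).val = if x = -1 then 0 else x.val + 1 := by
  obtain ⟨k, rfl⟩ := Nat.exists_eq_succ_of_ne_zero (NeZero.ne m)
  have h : (-1 : ZMod (k + 1)) = Fin.last k := val_injective _ (val_neg_one k)
  rw [h]
  exact Fin.val_add_one x

lemma det_of_pow_val_ne_zero {R : Type*} [CommRing R] [IsDomain R] {m : ℕ} [NeZero m]
    {r : ZMod m → R} (hr : Function.Injective r) :
    (of fun x j : ZMod m => r j ^ x.val).det ≠ 0 := by
  obtain ⟨k, rfl⟩ := Nat.exists_eq_succ_of_ne_zero (NeZero.ne m)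
  rw [← det_transpose]
  exact det_vandermonde_ne_zero_iff.mpr hr

end ZMod

lemma ite_mul_pow_val_add_one {M : Type*} [Monoid M] {m : ℕ} [NeZero m] (x : ZMod m)
    {u z : M} (hu : u ^ m = z) :
    (if x = (m : ZMod m) - 1 then z else 1) * u ^ (x + 1).val = u ^ (x.val + 1) := by
  rw [ZMod.natCast_self, zero_sub, ZMod.val_add_one_eq_ite]
  split_ifs with hx
  · obtain ⟨k, rfl⟩ := Nat.exists_eq_succ_of_ne_zero (NeZero.ne m)
    rw [pow_zero, mul_one, ← hu, hx, ZMod.val_neg_one]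
  · rw [one_mul]

lemma det_eq_prod_of_mulVec_eq_smul {K ι : Type*} [CommRing K] [IsDomain K] [Fintype ι]
    [DecidableEq ι] {A P : Matrix ι ι K} {d : ι → K} (hP : P.det ≠ 0)
    (hA : ∀ j, A *ᵥ (fun i => P i j) = d j • fun i => P i j) :
    A.det = ∏ j, d j := by
  have hAP : A * P = P * diagonal d := by
    ext i j
    rw [mul_diagonal, mul_comm]
    exact congrFun (hA j) i
  have hdet := congrArg det hAP
  rw [det_mul, det_mul, det_diagonal, mul_comm] at hdet
  exact mul_left_cancel₀ hP hdet

lemma nthRoots_eq_map_univ {R ι : Type*} [CommRing R] [IsDomain R] [Fintype ι] {m : ℕ}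
    {z : R} {r : ι → R} (hr : Function.Injective r) (hrz : ∀ i, r i ^ m = z)
    (hm : Fintype.card ι = m) :
    nthRoots m z = Finset.univ.val.map r := by
  refine (Multiset.eq_of_le_of_card_le ?_ ?_).symm
  · refine (Multiset.le_iff_subset (Finset.univ.nodup.map hr)).mpr fun x hx => ?_
    obtain ⟨i, -, rfl⟩ := Multiset.mem_map.mp hx
    have : 0 < m := hm ▸ Fintype.card_pos_iff.mpr ⟨i⟩
    exact (mem_nthRoots this).mpr (hrz i)
  · simpa [hm] using card_nthRoots m z

lemma Complex.exists_injective_pow_eq (m : ℕ) [NeZero m] {z : ℂ} (hz : z ≠ 0) :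
    ∃ r : ZMod m → ℂ, Function.Injective r ∧ ∀ j, r j ^ m = z := by
  obtain ⟨z₀, hz₀⟩ := IsAlgClosed.exists_pow_nat_eq z (Nat.pos_of_neZero m)
  have hζ := Complex.isPrimitiveRoot_exp m (NeZero.ne m)
  have hz₀0 : z₀ ≠ 0 := by rintro rfl; exact hz (by rw [← hz₀, zero_pow (NeZero.ne m)])
  refine ⟨fun j => z₀ * Complex.exp (2 * Real.pi * Complex.I / m) ^ j.val, fun a b hab => ?_,
    fun j => ?_⟩
  · exact ZMod.val_injective m (hζ.pow_inj a.val_lt b.val_lt (mul_left_cancel₀ hz₀0 hab))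
  · rw [mul_pow, hz₀, ← pow_mul, mul_comm j.val m, pow_mul, hζ.pow_eq_one, one_pow, mul_one]

section TorusGrid

variable {R : Type*} [CommRing R] {m n : ℕ}

def torusGridLaplacian (m n : ℕ) (z w : R) : Matrix (ZMod m × ZMod n) (ZMod m × ZMod n) R :=
  of fun a b =>
    (if a = b then (2 : R) else 0)
      - (if b.1 = a.1 + 1 ∧ b.2 = a.2 then (if a.1 = (m : ZMod m) - 1 then z else 1) else 0)
      - (if b.1 = a.1 ∧ b.2 = a.2 + 1 then (if a.2 = (n : ZMod n) - 1 then w else 1) else 0)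

def planeWave (u v : R) (a : ZMod m × ZMod n) : R := u ^ a.1.val * v ^ a.2.val

variable [NeZero m] [NeZero n]

lemma torusGridLaplacian_mulVec_apply (z w : R) (f : ZMod m × ZMod n → R) (a : ZMod m × ZMod n) :
    (torusGridLaplacian m n z w *ᵥ f) a = 2 * f a
      - (if a.1 = (m : ZMod m) - 1 then z else 1) * f (a.1 + 1, a.2)
      - (if a.2 = (n : ZMod n) - 1 then w else 1) * f (a.1, a.2 + 1) := by
  simp [torusGridLaplacian, mulVec, dotProduct, sub_mul, Finset.sum_sub_distrib, ite_and,
    Fintype.sum_prod_type]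

lemma torusGridLaplacian_mulVec_planeWave {z w u v : R} (hu : u ^ m = z) (hv : v ^ n = w) :
    torusGridLaplacian m n z w *ᵥ planeWave u v = (2 - u - v) • planeWave u v := by
  ext a
  rw [torusGridLaplacian_mulVec_apply, Pi.smul_apply, smul_eq_mul]
  simp only [planeWave]
  linear_combination (-v ^ a.2.val) * ite_mul_pow_val_add_one a.1 hu
    - u ^ a.1.val * ite_mul_pow_val_add_one a.2 hv

lemma det_planeWaveMatrix_ne_zero [IsDomain R] {r : ZMod m → R} {s : ZMod n → R}
    (hr : Function.Injective r) (hs : Function.Injective s) :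
    (of fun a b : ZMod m × ZMod n => planeWave (r b.1) (s b.2) a).det ≠ 0 := by
  have hkron : (of fun a b : ZMod m × ZMod n => planeWave (r b.1) (s b.2) a) =
      kroneckerMap (· * ·) (of fun x j : ZMod m => r j ^ x.val)
        (of fun y k : ZMod n => s k ^ y.val) := rfl
  rw [hkron, det_kronecker]
  exact mul_ne_zero (pow_ne_zero _ (ZMod.det_of_pow_val_ne_zero hr))
    (pow_ne_zero _ (ZMod.det_of_pow_val_ne_zero hs))

end TorusGrid

theorem det_torus_grid_laplacian (m n : ℕ) [NeZero m] [NeZero n]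
    (z w : ℂ) (hz : z ≠ 0) (hw : w ≠ 0) :
    (Matrix.of fun a b : ZMod m × ZMod n =>
        (if a = b then (2 : ℂ) else 0)
          - (if b.1 = a.1 + 1 ∧ b.2 = a.2 then (if a.1 = (m : ZMod m) - 1 then z else 1) else 0)
          - (if b.1 = a.1 ∧ b.2 = a.2 + 1 then (if a.2 = (n : ZMod n) - 1 then w else 1) else 0)).det
      = ((Polynomial.nthRoots m z).map fun u =>
          ((Polynomial.nthRoots n w).map fun v => 2 - u - v).prod).prod := by
  obtain ⟨r, hr, hrz⟩ := Complex.exists_injective_pow_eq m hz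
  obtain ⟨s, hs, hsw⟩ := Complex.exists_injective_pow_eq n hw
  have hdet : (torusGridLaplacian m n z w).det = ∏ b : ZMod m × ZMod n, (2 - r b.1 - s b.2) :=
    det_eq_prod_of_mulVec_eq_smul (det_planeWaveMatrix_ne_zero hr hs)
      fun b => torusGridLaplacian_mulVec_planeWave (hrz b.1) (hsw b.2)
  refine (hdet.trans (Fintype.prod_prod_type _)).trans ?_
  rw [nthRoots_eq_map_univ hr hrz (ZMod.card m), nthRoots_eq_map_univ hs hsw (ZMod.card n)]
  simp only [Finset.prod_eq_multiset_prod, Multiset.map_map, Function.comp_def]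
end

section
/- For every integer ℓ ≥ 1 and every nonzero complex number z: 2 − z^ℓ − z^{−ℓ} = Σ_{m=1}^{ℓ} (ℓ/m) · binom(m+ℓ−1, 2m−1) · (−1)^{m+1} · (2 − z − z^{−1})^m. -/
/-!
Put `t = z + z⁻¹ - 2`. The power sums `pₙ = zⁿ + z⁻ⁿ` satisfy `pₙ₊₂ = (t + 2) pₙ₊₁ - pₙ`, and so do
the Morgan–Voyce polynomials `bₙ(t) = ∑ₖ C(n+k, 2k) tᵏ`; comparing two initial values gives
`pₙ₊₁ = bₙ₊₁(t) + bₙ(t)`. The coefficient of `tᵐ` there is `C(ℓ+m, 2m) + C(ℓ-1+m, 2m)`, which equals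
`(ℓ/m) C(m+ℓ-1, 2m-1)`, and `t = -(2 - z - z⁻¹)` accounts for the signs.
-/

open Finset

theorem Nat.choose_add_two_add_choose (n k : ℕ) :
    (n + 2).choose (k + 2) + n.choose (k + 2) = 2 * (n + 1).choose (k + 2) + n.choose k := by
  rw [Nat.choose_succ_succ (n + 1), Nat.choose_succ_succ n (k + 1), Nat.choose_succ_succ n k]
  ring

theorem Nat.succ_mul_choose_add_choose (n m : ℕ) :
    (m + 1) * ((n + m + 1).choose (2 * m + 2) + (n + m).choose (2 * m + 2)) =
      n * (n + m).choose (2 * m + 1) := by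
  rcases lt_or_ge (n + m) (2 * m + 1) with h | h
  · rw [Nat.choose_eq_zero_of_lt h, Nat.choose_eq_zero_of_lt (by omega),
      Nat.choose_eq_zero_of_lt (by omega), add_zero, mul_zero, mul_zero]
  · have hrat := Nat.choose_succ_right_eq (n + m) (2 * m + 1)
    rw [Nat.choose_succ_succ (n + m) (2 * m + 1)]
    obtain ⟨d, rfl⟩ : ∃ d, n = m + 1 + d := ⟨n - (m + 1), by omega⟩
    rw [show m + 1 + d + m - (2 * m + 1) = d by omega] at hrat
    linear_combination hrat

section MorganVoyce

variable {R : Type*}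

/-- The Morgan–Voyce polynomial `bₙ`, written with `C(n+k, 2k) = C(n+k, n-k)`. -/
def morganVoyce [CommSemiring R] (x : R) (n : ℕ) : R :=
  ∑ k ∈ range (n + 1), ((n + k).choose (2 * k) : R) * x ^ k

theorem morganVoyce_eq_sum_range [CommSemiring R] (x : R) {n N : ℕ} (h : n < N) :
    morganVoyce x n = ∑ k ∈ range N, ((n + k).choose (2 * k) : R) * x ^ k := by
  refine sum_subset (range_subset_range.2 h) fun k _ hk => ?_
  rw [Nat.choose_eq_zero_of_lt (by simp at hk; omega), Nat.cast_zero, zero_mul]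

theorem morganVoyce_add_two [CommSemiring R] (x : R) (n : ℕ) :
    morganVoyce x (n + 2) + morganVoyce x n = (x + 2) * morganVoyce x (n + 1) := by
  have hx : x * morganVoyce x (n + 1) =
      ∑ k ∈ range (n + 2), ((n + 1 + k).choose (2 * k) : R) * x ^ (k + 1) := by
    rw [morganVoyce, mul_sum]
    exact sum_congr rfl fun k _ => by ring
  rw [add_mul, hx, morganVoyce, morganVoyce_eq_sum_range x (by omega : n < n + 2 + 1),
    morganVoyce_eq_sum_range x (by omega : n + 1 < n + 2 + 1), sum_range_succ' _ (n + 2),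
    sum_range_succ' _ (n + 2), sum_range_succ' _ (n + 2), mul_add, mul_sum]
  have key : ∀ k ∈ range (n + 2),
      ((n + 2 + (k + 1)).choose (2 * (k + 1)) : R) * x ^ (k + 1) +
        ((n + (k + 1)).choose (2 * (k + 1)) : R) * x ^ (k + 1) =
      ((n + 1 + k).choose (2 * k) : R) * x ^ (k + 1) +
        2 * (((n + 1 + (k + 1)).choose (2 * (k + 1)) : R) * x ^ (k + 1)) := fun k _ => by
    have h := congrArg (Nat.cast : ℕ → R) (Nat.choose_add_two_add_choose (n + k + 1) (2 * k))
    rw [show n + 2 + (k + 1) = n + k + 1 + 2 by ring, show n + (k + 1) = n + k + 1 by ring,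
      show n + 1 + (k + 1) = n + k + 1 + 1 by ring, show n + 1 + k = n + k + 1 by ring,
      show 2 * (k + 1) = 2 * k + 2 by ring]
    push_cast at h
    rw [← add_mul, h]
    ring
  have hsum := sum_congr rfl key
  rw [sum_add_distrib, sum_add_distrib] at hsum
  simp only [add_zero, mul_zero, Nat.choose_zero_right, Nat.cast_one, pow_zero, mul_one]
  rw [add_add_add_comm, hsum]
  ring

theorem pow_succ_add_pow_succ_eq_morganVoyce [CommRing R] {x y : R} (h : x * y = 1) (n : ℕ) :
    x ^ (n + 1) + y ^ (n + 1) =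
      morganVoyce (x + y - 2) (n + 1) + morganVoyce (x + y - 2) n := by
  induction n using Nat.twoStepInduction with
  | zero =>
    simp only [zero_add, pow_one, morganVoyce, Nat.reduceAdd, sum_range_succ, range_one,
      sum_singleton, add_zero, mul_zero, Nat.choose_succ_self_right, Nat.cast_one, pow_zero,
      mul_one, Nat.choose_self, one_mul]
    ring
  | one =>
    simp only [Nat.reduceAdd, morganVoyce, sum_range_succ, range_one, sum_singleton, add_zero,
      mul_zero, Nat.choose_zero_right, Nat.cast_one, pow_zero, mul_one, Nat.choose_succ_self_right,
      Nat.cast_ofNat, pow_one, Nat.reduceMul, Nat.choose_self, one_mul, zero_add]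
    linear_combination (-2) * h
  | more n ih₀ ih₁ =>
    have h₁ := morganVoyce_add_two (x + y - 2) (n + 1)
    rw [show n + 1 + 2 = n + 2 + 1 from rfl] at h₁
    rw [show n + 1 + 1 = n + 2 from rfl] at ih₁ h₁
    linear_combination (x + y) * ih₁ - ih₀ - (x ^ (n + 1) + y ^ (n + 1)) * h
      - h₁ - morganVoyce_add_two (x + y - 2) n

theorem morganVoyce_succ_add_morganVoyce [Field R] [CharZero R] (t : R) (n : ℕ) :
    morganVoyce t (n + 1) + morganVoyce t n =
      2 + ∑ m ∈ Icc 1 (n + 1), ((n + 1 : R) / m) * ((m + n).choose (2 * m - 1) : R) * t ^ m := by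
  rw [morganVoyce, morganVoyce_eq_sum_range t (by omega : n < n + 1 + 1), ← sum_add_distrib,
    sum_range_eq_add_Ico _ (by omega), Ico_add_one_right_eq_Icc]
  refine congrArg₂ (· + ·) (by norm_num) (sum_congr rfl fun m hm => ?_)
  obtain ⟨k, rfl⟩ : ∃ k, m = k + 1 := ⟨m - 1, by simp at hm; omega⟩
  have h := congrArg (Nat.cast : ℕ → R) (Nat.succ_mul_choose_add_choose (n + 1) k)
  rw [show n + 1 + (k + 1) = n + 1 + k + 1 by ring, show n + (k + 1) = n + 1 + k by ring,
    show k + 1 + n = n + 1 + k by ring, show 2 * (k + 1) - 1 = 2 * k + 1 by omega,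
    show 2 * (k + 1) = 2 * k + 2 by ring]
  push_cast at h ⊢
  field_simp
  linear_combination t ^ (k + 1) * h

end MorganVoyce

theorem chebyshev_like_identity_general (ℓ : ℕ) (z : ℂ) (hz : z ≠ 0) :
    2 - z ^ ℓ - (z ^ ℓ)⁻¹ =
      ∑ m ∈ Finset.Icc 1 ℓ,
        ((ℓ : ℂ) / (m : ℂ)) * ((m + ℓ - 1).choose (2 * m - 1) : ℂ) * (-1) ^ (m + 1) *
          (2 - z - z⁻¹) ^ m := by
  cases ℓ with
  | zero => norm_num
  | succ n =>
    have h := (pow_succ_add_pow_succ_eq_morganVoyce (mul_inv_cancel₀ hz) n).trans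
      (morganVoyce_succ_add_morganVoyce (z + z⁻¹ - 2) n)
    rw [← inv_pow, sub_sub, h, sub_add_cancel_left, ← sum_neg_distrib]
    refine sum_congr rfl fun m _ => ?_
    rw [Nat.add_succ_sub_one, Nat.cast_succ, show z + z⁻¹ - 2 = -(2 - z - z⁻¹) by ring, neg_pow]
    ring

theorem chebyshev_like_identity (ℓ : ℕ) (hℓ : 1 ≤ ℓ) (z : ℂ) (hz : z ≠ 0) :
    2 - z ^ ℓ - (z ^ ℓ)⁻¹ =
      ∑ m ∈ Finset.Icc 1 ℓ,
        ((ℓ : ℂ) / (m : ℂ)) * ((m + ℓ - 1).choose (2 * m - 1) : ℂ) * (-1) ^ (m + 1) *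
          (2 - z - z⁻¹) ^ m :=
  chebyshev_like_identity_general ℓ z hz
end

section
/- Let n ≥ 3 and z ∈ ℂ*. Let Δ be the n×n complex matrix with Δ_{i,i} = 2 for all i, Δ_{i,i+1} = Δ_{i+1,i} = −1 for 1 ≤ i ≤ n−1, Δ_{n,1} = −z, Δ_{1,n} = −z^{−1}, and all other entries 0. Then det Δ = 2 − z − z^{−1} = Π_{ζ : ζ^n = z} (2 − ζ − ζ^{−1}), the product over the n-th roots ζ of z. -/
/-!
For each of the `n` distinct `n`-th roots `ζ` of `z`, the function `x ↦ ζ ^ x` is an eigenvector of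
`Δ = 2 - S - S⁻¹`, where `S` is the shift twisted by `z` on the edge closing the cycle, with
eigenvalue `2 - ζ - ζ⁻¹`. These eigenvectors are the rows of an invertible Vandermonde matrix, so
`det Δ` is the product of the eigenvalues. Writing `2 - ζ - ζ⁻¹ = (1 - ζ)² / (-ζ)` and evaluating
`X ^ n - z = ∏ (X - ζ)` at `1` and at `0` turns that product into `(1 - z)² / (-z) = 2 - z - z⁻¹`.
-/

open Matrix Polynomial

theorem Matrix.det_eq_prod_of_mulVec_eq_smul {ι R : Type*} [Fintype ι] [DecidableEq ι]
    [CommRing R] (A W : Matrix ι ι R) (d : ι → R) (hW : IsUnit W.det)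
    (h : ∀ k, A *ᵥ W k = d k • W k) : A.det = ∏ k, d k := by
  have hAW : A * Wᵀ = Wᵀ * diagonal d := by
    ext i k
    rw [mul_diagonal]
    simpa [mul_apply, mulVec, dotProduct, mul_comm] using congrFun (h k) i
  have hdet := congrArg det hAW
  rw [det_mul, det_mul, det_transpose, det_diagonal, mul_comm] at hdet
  exact hW.mul_left_cancel hdet

section NthRoots

variable {K : Type*} [Field K] {n : ℕ} {z : K}

theorem Polynomial.nodup_nthRoots (hn : (n : K) ≠ 0) (hz : z ≠ 0) : (nthRoots n z).Nodup :=
  nodup_roots (separable_X_pow_sub_C z hn hz)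

theorem Polynomial.card_nthRoots_of_isAlgClosed [IsAlgClosed K] (n : ℕ) (z : K) :
    Multiset.card (nthRoots n z) = n := by
  rw [nthRoots, IsAlgClosed.card_roots_eq_natDegree, natDegree_X_pow_sub_C]

theorem Matrix.det_eq_prod_nthRoots_of_mulVec_pow [IsAlgClosed K] (hn : (n : K) ≠ 0)
    (hz : z ≠ 0) (A : Matrix (Fin n) (Fin n) K) (f : K → K)
    (h : ∀ ζ, ζ ^ n = z →
      A *ᵥ (fun i : Fin n => ζ ^ (i : ℕ)) = f ζ • fun i : Fin n => ζ ^ (i : ℕ)) :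
    A.det = ((nthRoots n z).map f).prod := by
  let s : Finset K := ⟨nthRoots n z, nodup_nthRoots hn hz⟩
  let e : s ≃ Fin n := Fintype.equivFinOfCardEq <| by
    rw [Fintype.card_coe]
    exact card_nthRoots_of_isAlgClosed n z
  let r : Fin n → K := fun k => e.symm k
  have hr : ∀ k, r k ^ n = z := fun k =>
    (mem_nthRoots (Nat.pos_of_ne_zero (by rintro rfl; simp at hn))).1 (e.symm k).2
  have hW : IsUnit (vandermonde r).det := isUnit_iff_ne_zero.2 <|
    det_vandermonde_ne_zero_iff.2 <| Subtype.val_injective.comp e.symm.injective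
  rw [det_eq_prod_of_mulVec_eq_smul A _ (fun k => f (r k)) hW fun k => h _ (hr k),
    Equiv.prod_comp e.symm (fun x : s => f x), Finset.prod_coe_sort]
  rfl

theorem Polynomial.prod_nthRoots_two_sub_sub_inv [IsAlgClosed K] (hn : n ≠ 0) (hz : z ≠ 0) :
    ((nthRoots n z).map fun ζ => 2 - ζ - ζ⁻¹).prod = 2 - z - z⁻¹ := by
  have hsplit := IsAlgClosed.splits (X ^ n - C z)
  have hmonic := monic_X_pow_sub_C z hn
  have h1 : ((nthRoots n z).map fun ζ => 1 - ζ).prod = 1 - z := by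
    have := hsplit.eval_eq_prod_roots_of_monic hmonic 1
    simp only [eval_sub, eval_pow, eval_X, eval_C, one_pow] at this
    exact this.symm
  have h0 : ((nthRoots n z).map fun ζ => 0 - ζ).prod = 0 - z := by
    have := hsplit.eval_eq_prod_roots_of_monic hmonic 0
    simp only [eval_sub, eval_pow, eval_X, eval_C, zero_pow hn] at this
    exact this.symm
  have hne : ∀ ζ ∈ nthRoots n z, ζ ≠ 0 := by
    rintro ζ hζ rfl
    rw [mem_nthRoots (Nat.pos_of_ne_zero hn), zero_pow hn] at hζ
    exact hz hζ.symm
  calc ((nthRoots n z).map fun ζ => 2 - ζ - ζ⁻¹).prod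
      = ((nthRoots n z).map fun ζ => (1 - ζ) * (1 - ζ) / (0 - ζ)).prod := by
        refine congrArg _ (Multiset.map_congr rfl fun ζ hζ => ?_)
        have := hne ζ hζ
        field_simp
        ring
    _ = (1 - z) * (1 - z) / (0 - z) := by
        rw [Multiset.prod_map_div, Multiset.prod_map_mul, h1, h0]
    _ = 2 - z - z⁻¹ := by field_simp; ring

end NthRoots

section TwistedShift

variable {K : Type*} [Field K] {m : ℕ}

def cycleTwist (z : K) (i : Fin (m + 1)) : K := if i = Fin.last m then z else 1

def twistedShift (z : K) : Matrix (Fin (m + 1)) (Fin (m + 1)) K :=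
  of fun i j => if j = i + 1 then cycleTwist z i else 0

-- `(twistedShift z⁻¹)ᵀ` is the inverse of `twistedShift z`.
def cycleLineLaplacian (z : K) : Matrix (Fin (m + 1)) (Fin (m + 1)) K :=
  (2 : K) • 1 - twistedShift z - (twistedShift z⁻¹)ᵀ

theorem cycleTwist_inv (z : K) (i : Fin (m + 1)) : cycleTwist z⁻¹ i = (cycleTwist z i)⁻¹ := by
  unfold cycleTwist; split_ifs <;> simp

theorem cycleTwist_mul_pow_val_add_one {z ζ : K} (h : ζ ^ (m + 1) = z) (i : Fin (m + 1)) :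
    cycleTwist z i * ζ ^ ((i + 1 : Fin (m + 1)) : ℕ) = ζ ^ ((i : ℕ) + 1) := by
  unfold cycleTwist
  rw [Fin.val_add_one]
  split_ifs with hi
  · simp [hi, h]
  · rw [one_mul]

theorem twistedShift_mulVec_pow {z ζ : K} (h : ζ ^ (m + 1) = z) :
    twistedShift z *ᵥ (fun i : Fin (m + 1) => ζ ^ (i : ℕ)) =
      ζ • fun i : Fin (m + 1) => ζ ^ (i : ℕ) := by
  ext i
  simp only [twistedShift, mulVec, dotProduct, of_apply, ite_mul, zero_mul,
    Finset.sum_ite_eq', Finset.mem_univ, if_true, Pi.smul_apply, smul_eq_mul]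
  rw [cycleTwist_mul_pow_val_add_one h, pow_succ, mul_comm]

theorem twistedShift_inv_transpose_mulVec_pow {z ζ : K} (h : ζ ^ (m + 1) = z) (hζ : ζ ≠ 0) :
    (twistedShift z⁻¹)ᵀ *ᵥ (fun i : Fin (m + 1) => ζ ^ (i : ℕ)) =
      ζ⁻¹ • fun i : Fin (m + 1) => ζ ^ (i : ℕ) := by
  ext i
  obtain ⟨k, rfl⟩ : ∃ k, i = k + 1 := ⟨i - 1, (sub_add_cancel i 1).symm⟩
  simp only [twistedShift, mulVec, dotProduct, transpose_apply, of_apply, add_left_inj,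
    ite_mul, zero_mul, Finset.sum_ite_eq, Finset.mem_univ, if_true, Pi.smul_apply, smul_eq_mul,
    cycleTwist_inv]
  have hk := cycleTwist_mul_pow_val_add_one h k
  have hc : cycleTwist z k ≠ 0 := by
    rintro hc; rw [hc, zero_mul] at hk; exact pow_ne_zero _ hζ hk.symm
  rw [pow_succ] at hk
  field_simp
  linear_combination -hk

theorem cycleLineLaplacian_mulVec_pow {z ζ : K} (h : ζ ^ (m + 1) = z) (hζ : ζ ≠ 0) :
    cycleLineLaplacian z *ᵥ (fun i : Fin (m + 1) => ζ ^ (i : ℕ)) =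
      (2 - ζ - ζ⁻¹) • fun i : Fin (m + 1) => ζ ^ (i : ℕ) := by
  unfold cycleLineLaplacian
  rw [sub_mulVec, sub_mulVec, smul_mulVec, one_mulVec,
    twistedShift_mulVec_pow h, twistedShift_inv_transpose_mulVec_pow h hζ, sub_smul, sub_smul]

theorem det_cycleLineLaplacian [IsAlgClosed K] {z : K} (hm : ((m + 1 : ℕ) : K) ≠ 0)
    (hz : z ≠ 0) :
    (cycleLineLaplacian z : Matrix (Fin (m + 1)) (Fin (m + 1)) K).det =
      ((nthRoots (m + 1) z).map fun ζ => 2 - ζ - ζ⁻¹).prod :=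
  det_eq_prod_nthRoots_of_mulVec_pow hm hz _ _ fun _ hζ =>
    cycleLineLaplacian_mulVec_pow hζ (ne_zero_pow m.succ_ne_zero (hζ ▸ hz))

theorem cycleLineLaplacian_eq_of_ite (z : K) :
    cycleLineLaplacian z = of fun i j : Fin (m + 2 + 1) =>
      if i = j then (2 : K)
      else if (i : ℕ) + 1 = (j : ℕ) then -1
      else if (j : ℕ) + 1 = (i : ℕ) then -1
      else if (i : ℕ) = m + 2 + 1 - 1 ∧ (j : ℕ) = 0 then -z
      else if (i : ℕ) = 0 ∧ (j : ℕ) = m + 2 + 1 - 1 then -z⁻¹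
      else 0 := by
  ext i j
  simp only [cycleLineLaplacian, twistedShift, cycleTwist, Matrix.sub_apply, Matrix.smul_apply,
    Matrix.one_apply, transpose_apply, of_apply, Fin.ext_iff, Fin.val_add_one, Fin.val_last,
    smul_eq_mul]
  split_ifs <;> first | omega | simp

end TwistedShift

theorem det_cycle_lineLaplacian (n : ℕ) (hn : 3 ≤ n) (z : ℂ) (hz : z ≠ 0) :
    (Matrix.of fun i j : Fin n =>
        if i = j then (2 : ℂ)
        else if (i : ℕ) + 1 = (j : ℕ) then -1
        else if (j : ℕ) + 1 = (i : ℕ) then -1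
        else if (i : ℕ) = n - 1 ∧ (j : ℕ) = 0 then -z
        else if (i : ℕ) = 0 ∧ (j : ℕ) = n - 1 then -z⁻¹
        else 0).det = 2 - z - z⁻¹ ∧
    (Matrix.of fun i j : Fin n =>
        if i = j then (2 : ℂ)
        else if (i : ℕ) + 1 = (j : ℕ) then -1
        else if (j : ℕ) + 1 = (i : ℕ) then -1
        else if (i : ℕ) = n - 1 ∧ (j : ℕ) = 0 then -z
        else if (i : ℕ) = 0 ∧ (j : ℕ) = n - 1 then -z⁻¹
        else 0).det =
      ((Polynomial.nthRoots n z).map fun ζ => 2 - ζ - ζ⁻¹).prod := by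
  obtain ⟨m, rfl⟩ : ∃ m, n = m + 2 + 1 := ⟨n - 3, by omega⟩
  rw [← cycleLineLaplacian_eq_of_ite]
  have hdet := det_cycleLineLaplacian (m := m + 2) (Nat.cast_ne_zero.2 (by omega)) hz
  exact ⟨hdet.trans (prod_nthRoots_two_sub_sub_inv (by omega) hz), hdet⟩
end
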